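/- Every instance of the da Costa axiom (cl) ¬(α ∧ ¬α) → ∘α and every instance of the consistency-propagation axioms (ca_#) (∘α ∧ ∘β) → ∘(α # β), for # ∈ {∧, ∨, →}, is true at every world of every swap Kripke model for DCila. -/

import Mathlib

/-- Formulas over the signature Σ = {∧, ∨, →, ¬, ∘, O}, with countably many
propositional variables. -/
inductive Form : Type
  | var : ℕ → Form
  | and : Form → Form → Form
  | or : Form → Form → Form
  | imp : Form → Form → Form
  | neg : Form → Form
  | circ : Form → Form
  | obl : Form → Form

namespace Form
/-- ⊥_α := (α ∧ ¬α) ∧ ∘α -/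
def bot (α : Form) : Form := (α.and α.neg).and α.circ
end Form

/-- Theorems of DCila: the DmbC axioms (CPL⁺, (EM), (bc), (O-K), (O-E)) plus
(ci), (cl), (cf) and the propagation axioms (ca_#) for # ∈ {∧, ∨, →},
with Modus Ponens and O-necessitation. -/
inductive ThmDCila : Form → Prop
  | A1 (α β : Form) : ThmDCila (α.imp (β.imp α))
  | A2 (α β γ : Form) : ThmDCila ((α.imp (β.imp γ)).imp ((α.imp β).imp (α.imp γ)))
  | A3 (α β : Form) : ThmDCila (α.imp (β.imp (α.and β)))
  | A4 (α β : Form) : ThmDCila ((α.and β).imp α)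
  | A5 (α β : Form) : ThmDCila ((α.and β).imp β)
  | A6 (α β : Form) : ThmDCila (α.imp (α.or β))
  | A7 (α β : Form) : ThmDCila (β.imp (α.or β))
  | A8 (α β γ : Form) : ThmDCila ((α.imp γ).imp ((β.imp γ).imp ((α.or β).imp γ)))
  | A9 (α β : Form) : ThmDCila (((α.imp β).imp α).imp α)
  | EM (α : Form) : ThmDCila (α.or α.neg)
  | bc (α β : Form) : ThmDCila (α.circ.imp (α.imp (α.neg.imp β)))
  | ci (α : Form) : ThmDCila (α.circ.neg.imp (α.and α.neg))
  | cl (α : Form) : ThmDCila ((α.and α.neg).neg.imp α.circ)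
  | cf (α : Form) : ThmDCila (α.neg.neg.imp α)
  | caAnd (α β : Form) : ThmDCila ((α.circ.and β.circ).imp (α.and β).circ)
  | caOr (α β : Form) : ThmDCila ((α.circ.and β.circ).imp (α.or β).circ)
  | caImp (α β : Form) : ThmDCila ((α.circ.and β.circ).imp (α.imp β).circ)
  | OK (α β : Form) : ThmDCila ((α.imp β).obl.imp (α.obl.imp β.obl))
  | OE (α : Form) : ThmDCila (α.bot.obl.imp α.bot)
  | mp {α β : Form} : ThmDCila (α.imp β) → ThmDCila α → ThmDCila β
  | nec {α : Form} : ThmDCila α → ThmDCila α.obl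

/-- conj γ [γ₂,…,γ_k] = γ ∧ γ₂ ∧ … ∧ γ_k -/
def conj (γ : Form) : List Form → Form
  | [] => γ
  | δ :: l => γ.and (conj δ l)

/-- Γ ⊢_DCila φ iff ⊢ φ or ⊢ (γ₁ ∧ … ∧ γ_k) → φ for some γ₁,…,γ_k ∈ Γ, k ≥ 1. -/
def DerivDCila (Γ : Set Form) (φ : Form) : Prop :=
  ThmDCila φ ∨ ∃ (γ : Form) (l : List Form),
    (∀ δ ∈ γ :: l, δ ∈ Γ) ∧ ThmDCila ((conj γ l).imp φ)

/-- The three snapshots T = (1,0), t = (1,1), F = (0,1). -/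
inductive SV : Type
  | T | t | F
deriving DecidableEq

/-- First coordinate of a snapshot. -/
def SV.p1 : SV → Bool
  | .T => true | .t => true | .F => false

/-- Second coordinate of a snapshot. -/
def SV.p2 : SV → Bool
  | .T => false | .t => true | .F => true

/-- Designated values: D = {T, t}, i.e. first coordinate is 1. -/
def SV.desig (a : SV) : Prop := a.p1 = true

/-- The Boolean (classical) snapshots {T, F}. -/
def SV.boo (a : SV) : Prop := a = SV.T ∨ a = SV.F

/-- Swap Kripke model conditions for DCila on a serial frame (W,R):
the DCi conditions (with ¬ interpreted by ¬̃₁ and ∘ by ∘̃₂) plus the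
restrictions that v_w(α) = t implies v_w(α ∧ ¬α) = T, and that
v_w(α), v_w(β) ∈ {T,F} implies v_w(α # β) ∈ {T,F} for # ∈ {∧, ∨, →}. -/
structure IsModelDCila {W : Type} (R : W → W → Prop) (v : W → Form → SV) : Prop where
  serial : ∀ w, ∃ w', R w w'
  and_ : ∀ w α β, (v w (α.and β)).p1 = ((v w α).p1 && (v w β).p1)
  or_ : ∀ w α β, (v w (α.or β)).p1 = ((v w α).p1 || (v w β).p1)
  imp_ : ∀ w α β, (v w (α.imp β)).p1 = (!(v w α).p1 || (v w β).p1)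
  neg_ : ∀ w α, (v w α.neg).p1 = (v w α).p2 ∧ (v w α.neg).p2 ≤ (v w α).p1
  circ_ : ∀ w α, (v w α.circ).p1 = !((v w α).p1 && (v w α).p2) ∧
    (v w α.circ).p2 = ((v w α).p1 && (v w α).p2)
  obl_ : ∀ w α, ((v w α.obl).p1 = true ↔ ∀ w', R w w' → (v w' α).p1 = true)
  cl_ : ∀ w α, v w α = SV.t → v w (α.and α.neg) = SV.T
  booAnd : ∀ w α β, (v w α).boo → (v w β).boo → (v w (α.and β)).boo
  booOr : ∀ w α β, (v w α).boo → (v w β).boo → (v w (α.or β)).boo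
  booImp : ∀ w α β, (v w α).boo → (v w β).boo → (v w (α.imp β)).boo

/-- Γ ⊨_DCila φ : semantic consequence over all swap Kripke models for DCila. -/
def SemDCila (Γ : Set Form) (φ : Form) : Prop :=
  ∀ (W : Type) (R : W → W → Prop) (v : W → Form → SV), Nonempty W →
    IsModelDCila R v → ∀ w : W, (∀ γ ∈ Γ, (v w γ).desig) → (v w φ).desig

/-! A formula `∘α` is true exactly when `α` takes one of the classical values `T`, `F`. So (ca_#)
is the closure of `{T, F}` under the binary connectives, and (cl) holds because `v(α) = t` forces
`v(α ∧ ¬α) = T`, at which `¬(α ∧ ¬α)` is false. -/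

theorem SV.boo_iff_ne_t (a : SV) : a.boo ↔ a ≠ SV.t := by
  cases a <;> simp [SV.boo]

namespace IsModelDCila

variable {W : Type} {R : W → W → Prop} {v : W → Form → SV} (hM : IsModelDCila R v) (w : W)
include hM

theorem desig_and_iff (α β : Form) :
    (v w (α.and β)).desig ↔ (v w α).desig ∧ (v w β).desig := by
  simp only [SV.desig, hM.and_ w α β, Bool.and_eq_true]

theorem desig_imp_iff (α β : Form) :
    (v w (α.imp β)).desig ↔ ((v w α).desig → (v w β).desig) := by
  simp only [SV.desig, hM.imp_ w α β, Bool.or_eq_true, Bool.not_eq_true', imp_iff_not_or,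
    Bool.not_eq_true]

theorem desig_circ_iff (α : Form) : (v w α.circ).desig ↔ (v w α).boo := by
  rw [SV.desig, (hM.circ_ w α).1]
  cases v w α <;> simp [SV.boo, SV.p1, SV.p2]

theorem boo_of_desig_neg_and_neg {α : Form} (h : (v w (α.and α.neg).neg).desig) :
    (v w α).boo := by
  rw [SV.boo_iff_ne_t]
  intro ht
  rw [SV.desig, (hM.neg_ w _).1, hM.cl_ w α ht] at h
  cases h

end IsModelDCila

/-- Every instance of (cl) ¬(α ∧ ¬α) → ∘α and of (ca_#) (∘α ∧ ∘β) → ∘(α # β),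
for # ∈ {∧, ∨, →}, is true at every world of every swap Kripke model for DCila. -/
theorem cl_ca_valid_DCila {W : Type} (R : W → W → Prop) (v : W → Form → SV)
    (hM : IsModelDCila R v) (w : W) (α β : Form) :
    (v w ((α.and α.neg).neg.imp α.circ)).desig ∧
    (v w ((α.circ.and β.circ).imp (α.and β).circ)).desig ∧
    (v w ((α.circ.and β.circ).imp (α.or β).circ)).desig ∧
    (v w ((α.circ.and β.circ).imp (α.imp β).circ)).desig := by
  simp only [hM.desig_imp_iff, hM.desig_and_iff, hM.desig_circ_iff]
  exact ⟨hM.boo_of_desig_neg_and_neg w, fun ⟨hα, hβ⟩ => hM.booAnd w α β hα hβ,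
    fun ⟨hα, hβ⟩ => hM.booOr w α β hα hβ, fun ⟨hα, hβ⟩ => hM.booImp w α β hα hβ⟩
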